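/- Let $M$ be a left-left Yetter-Drinfeld module over the tensor product bialgebra $H\otimes H^*$, with induced structures as above. Then the left-right Long compatibility holds: $(h\cdot m)_{\langle 0\rangle}\otimes (h\cdot m)_{\langle 1\rangle} = h\cdot m_{\langle 0\rangle}\otimes m_{\langle 1\rangle}$ for all $h\in H$, $m\in M$. -/

import Mathlib

/- Common setup: Yetter-Drinfeld-Long bimodules over a bialgebra `H`, and
Yetter-Drinfeld modules over the tensor product bialgebra `H ⊗ H^*`. -/

open TensorProduct LinearMap Module

noncomputable section

namespace YDL

variable (k : Type) [Field k] (H : Type) [Ring H] [Bialgebra k H]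
variable (M : Type) [AddCommGroup M] [Module k M]

/-- Data of an `H`-bimodule, `H`-bicomodule structure on `M`:
left action `aL`, right action `aR`, left coaction `cL`, right coaction `cR`. -/
structure LRData where
  aL : H ⊗[k] M →ₗ[k] M
  aR : M ⊗[k] H →ₗ[k] M
  cL : M →ₗ[k] H ⊗[k] M
  cR : M →ₗ[k] M ⊗[k] H

variable {k H M}

/-- `M` is a left `H`-module. -/
structure IsLMod (D : LRData k H M) : Prop where
  one_act : ∀ m : M, D.aL (1 ⊗ₜ m) = m
  mul_act : ∀ (g h : H) (m : M), D.aL ((g * h) ⊗ₜ m) = D.aL (g ⊗ₜ D.aL (h ⊗ₜ m))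

/-- `M` is a right `H`-module. -/
structure IsRMod (D : LRData k H M) : Prop where
  act_one : ∀ m : M, D.aR (m ⊗ₜ 1) = m
  act_mul : ∀ (m : M) (g h : H), D.aR (m ⊗ₜ (g * h)) = D.aR (D.aR (m ⊗ₜ g) ⊗ₜ h)

/-- `M` is a left `H`-comodule. -/
structure IsLCom (D : LRData k H M) : Prop where
  coassoc : (TensorProduct.assoc k H H M).toLinearMap ∘ₗ map Coalgebra.comul LinearMap.id ∘ₗ D.cL
      = map LinearMap.id D.cL ∘ₗ D.cL
  counit : (TensorProduct.lid k M).toLinearMap ∘ₗ map Coalgebra.counit LinearMap.id ∘ₗ D.cL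
      = LinearMap.id

/-- `M` is a right `H`-comodule. -/
structure IsRCom (D : LRData k H M) : Prop where
  coassoc : (TensorProduct.assoc k M H H).toLinearMap ∘ₗ map D.cR LinearMap.id ∘ₗ D.cR
      = map LinearMap.id Coalgebra.comul ∘ₗ D.cR
  counit : (TensorProduct.rid k M).toLinearMap ∘ₗ map LinearMap.id Coalgebra.counit ∘ₗ D.cR
      = LinearMap.id

/-- Left-left Yetter-Drinfeld condition (1.1):
`(h₁·m)₍₋₁₎h₂ ⊗ (h₁·m)₍₀₎ = h₁m₍₋₁₎ ⊗ h₂·m₍₀₎`, as maps `H ⊗ M → H ⊗ M`. -/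
def Cond1 (D : LRData k H M) : Prop :=
  map (LinearMap.mul' k H ∘ₗ (TensorProduct.comm k H H).toLinearMap) LinearMap.id ∘ₗ
    (TensorProduct.assoc k H H M).symm.toLinearMap ∘ₗ
    map LinearMap.id (D.cL ∘ₗ D.aL) ∘ₗ
    (TensorProduct.assoc k H H M).toLinearMap ∘ₗ
    map ((TensorProduct.comm k H H).toLinearMap ∘ₗ Coalgebra.comul) LinearMap.id
  = map (LinearMap.mul' k H) D.aL ∘ₗ
    (tensorTensorTensorComm k H H H M).toLinearMap ∘ₗ map Coalgebra.comul D.cL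

/-- Left-right Long condition (1.2): `(h·m)₍₀₎ ⊗ (h·m)₍₁₎ = h·m₍₀₎ ⊗ m₍₁₎`. -/
def Cond2 (D : LRData k H M) : Prop :=
  D.cR ∘ₗ D.aL
  = map D.aL LinearMap.id ∘ₗ (TensorProduct.assoc k H M H).symm.toLinearMap ∘ₗ
      map LinearMap.id D.cR

/-- Right-right Yetter-Drinfeld condition (1.3):
`(m·h₂)₍₀₎ ⊗ h₁(m·h₂)₍₁₎ = m₍₀₎·h₁ ⊗ m₍₁₎h₂`, as maps `M ⊗ H → M ⊗ H`. -/
def Cond3 (D : LRData k H M) : Prop :=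
  map LinearMap.id (LinearMap.mul' k H ∘ₗ (TensorProduct.comm k H H).toLinearMap) ∘ₗ
    (TensorProduct.assoc k M H H).toLinearMap ∘ₗ
    map (D.cR ∘ₗ D.aR) LinearMap.id ∘ₗ
    (TensorProduct.assoc k M H H).symm.toLinearMap ∘ₗ
    map LinearMap.id ((TensorProduct.comm k H H).toLinearMap ∘ₗ Coalgebra.comul)
  = map D.aR (LinearMap.mul' k H) ∘ₗ
    (tensorTensorTensorComm k M H H H).toLinearMap ∘ₗ map D.cR Coalgebra.comul

/-- Right-left Long condition (1.4): `(m·h)₍₋₁₎ ⊗ (m·h)₍₀₎ = m₍₋₁₎ ⊗ m₍₀₎·h`. -/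
def Cond4 (D : LRData k H M) : Prop :=
  D.cL ∘ₗ D.aR
  = map LinearMap.id D.aR ∘ₗ (TensorProduct.assoc k H M H).toLinearMap ∘ₗ
      map D.cL LinearMap.id

/-- `M` with the data `D` is a Yetter-Drinfeld-Long bimodule: it is an `H`-bimodule
and an `H`-bicomodule satisfying the four compatibility conditions. -/
structure IsLR (D : LRData k H M) : Prop where
  lmod : IsLMod D
  rmod : IsRMod D
  lcom : IsLCom D
  rcom : IsRCom D
  bimod : ∀ (h h' : H) (m : M), D.aL (h ⊗ₜ D.aR (m ⊗ₜ h')) = D.aR (D.aL (h ⊗ₜ m) ⊗ₜ h')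
  bicom : (TensorProduct.assoc k H M H).toLinearMap ∘ₗ map D.cL LinearMap.id ∘ₗ D.cR
      = map LinearMap.id D.cR ∘ₗ D.cL
  cond1 : Cond1 D
  cond2 : Cond2 D
  cond3 : Cond3 D
  cond4 : Cond4 D

variable (k H M)

/-- The tensor product bialgebra `H ⊗ H^*` (as a vector space). -/
abbrev X := H ⊗[k] Module.Dual k H

/-- Convolution product on `H^*`: `⟨f*g, h⟩ = ⟨f,h₁⟩⟨g,h₂⟩`. -/
def convL : Module.Dual k H ⊗[k] Module.Dual k H →ₗ[k] Module.Dual k H :=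
  (Coalgebra.comul (R := k) (A := H)).dualMap ∘ₗ TensorProduct.dualDistrib k H H

/-- Counit of `H^*`: evaluation at `1`. -/
def εD : Module.Dual k H →ₗ[k] k := LinearMap.applyₗ (1 : H)

/-- Multiplication of the tensor product bialgebra `H ⊗ H^*`. -/
def μX : X k H ⊗[k] X k H →ₗ[k] X k H :=
  map (LinearMap.mul' k H) (convL k H) ∘ₗ
    (tensorTensorTensorComm k H (Module.Dual k H) H (Module.Dual k H)).toLinearMap

/-- Unit of `H ⊗ H^*`. -/
def oneX : X k H := 1 ⊗ₜ (Coalgebra.counit : Module.Dual k H)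

/-- Counit of `H ⊗ H^*`. -/
def εX : X k H →ₗ[k] k := LinearMap.mul' k k ∘ₗ map Coalgebra.counit (εD k H)

variable [FiniteDimensional k H]

/-- Comultiplication of `H^*` (for finite dimensional `H`): dual of multiplication. -/
def ΔD : Module.Dual k H →ₗ[k] Module.Dual k H ⊗[k] Module.Dual k H :=
  (TensorProduct.dualDistribEquiv k H H).symm.toLinearMap ∘ₗ (LinearMap.mul' k H).dualMap

/-- Comultiplication of the tensor product bialgebra `H ⊗ H^*`. -/
def ΔX : X k H →ₗ[k] X k H ⊗[k] X k H :=
  (tensorTensorTensorComm k H H (Module.Dual k H) (Module.Dual k H)).toLinearMap ∘ₗ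
    map Coalgebra.comul (ΔD k H)

/-- The canonical element `∑ hᵢ ⊗ hⁱ ∈ H ⊗ H^*` (dual bases). -/
def canel : H ⊗[k] Module.Dual k H := coevaluation k H 1

end YDL

end
namespace YDL

noncomputable section
open TensorProduct LinearMap Module

variable (k : Type) [Field k] (H : Type) [Ring H] [Bialgebra k H]
variable (M N P : Type) [AddCommGroup M] [Module k M] [AddCommGroup N] [Module k N]
  [AddCommGroup P] [Module k P]

/-- Data of a module-comodule structure on `M` over `H ⊗ H^*`. -/
structure YDData where
  act : X k H ⊗[k] M →ₗ[k] M
  coact : M →ₗ[k] X k H ⊗[k] M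

variable {k H M N P}

/-- `M` is a left `H ⊗ H^*`-module (stated on pure tensors, which span `H ⊗ H^*`). -/
structure IsXMod (E : YDData k H M) : Prop where
  one_act : ∀ m : M, E.act (oneX k H ⊗ₜ m) = m
  mul_act : ∀ (h h' : H) (f f' : Module.Dual k H) (m : M),
    E.act (((h * h') ⊗ₜ convL k H (f ⊗ₜ f')) ⊗ₜ m)
      = E.act ((h ⊗ₜ f) ⊗ₜ E.act ((h' ⊗ₜ f') ⊗ₜ m))

variable [FiniteDimensional k H]

/-- `M` is a left `H ⊗ H^*`-comodule. -/
structure IsXCom (E : YDData k H M) : Prop where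
  coassoc : (TensorProduct.assoc k (X k H) (X k H) M).toLinearMap ∘ₗ
      map (ΔX k H) LinearMap.id ∘ₗ E.coact = map LinearMap.id E.coact ∘ₗ E.coact
  counit : (TensorProduct.lid k M).toLinearMap ∘ₗ map (εX k H) LinearMap.id ∘ₗ E.coact
      = LinearMap.id

/-- The left-left Yetter-Drinfeld compatibility over `H ⊗ H^*`:
`(x₁·m)₍₋₁₎x₂ ⊗ (x₁·m)₍₀₎ = x₁m₍₋₁₎ ⊗ x₂·m₍₀₎`, as maps `(H ⊗ H^*) ⊗ M → (H ⊗ H^*) ⊗ M`. -/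
def CondYD (E : YDData k H M) : Prop :=
  map (μX k H ∘ₗ (TensorProduct.comm k (X k H) (X k H)).toLinearMap) LinearMap.id ∘ₗ
    (TensorProduct.assoc k (X k H) (X k H) M).symm.toLinearMap ∘ₗ
    map LinearMap.id (E.coact ∘ₗ E.act) ∘ₗ
    (TensorProduct.assoc k (X k H) (X k H) M).toLinearMap ∘ₗ
    map ((TensorProduct.comm k (X k H) (X k H)).toLinearMap ∘ₗ ΔX k H) LinearMap.id
  = map (μX k H) E.act ∘ₗ
    (tensorTensorTensorComm k (X k H) (X k H) (X k H) M).toLinearMap ∘ₗ map (ΔX k H) E.coact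

/-- `M` is a left-left Yetter-Drinfeld module over `H ⊗ H^*`. -/
structure IsYD (E : YDData k H M) : Prop where
  xmod : IsXMod E
  xcom : IsXCom E
  yd : CondYD E

/-! ### The functor `F : 𝓛𝓡(H) → ᴴ⊗ᴴ*YD` -/

/-- `f ⊗ m ↦ ⟨f, m₍₁₎⟩ m₍₀₎`, built from a right coaction `cR`. -/
def evR (cR : M →ₗ[k] M ⊗[k] H) : Module.Dual k H ⊗[k] M →ₗ[k] M :=
  (TensorProduct.lid k M).toLinearMap ∘ₗ map (contractLeft k H) LinearMap.id ∘ₗ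
    (TensorProduct.assoc k (Module.Dual k H) H M).symm.toLinearMap ∘ₗ
    map LinearMap.id ((TensorProduct.comm k M H).toLinearMap ∘ₗ cR)

/-- The `H ⊗ H^*`-action `(h ⊗ f) · m = ⟨f, m₍₁₎⟩ h · m₍₀₎` (formula (2.1)). -/
def Fact (D : LRData k H M) : X k H ⊗[k] M →ₗ[k] M :=
  D.aL ∘ₗ map LinearMap.id (evR D.cR) ∘ₗ
    (TensorProduct.assoc k H (Module.Dual k H) M).toLinearMap

/-- `m ↦ ∑ hⁱ ⊗ m · hᵢ`, built from a right action `aR`. -/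
def insD (aR : M ⊗[k] H →ₗ[k] M) : M →ₗ[k] Module.Dual k H ⊗[k] M :=
  map LinearMap.id (aR ∘ₗ (TensorProduct.comm k H M).toLinearMap) ∘ₗ
    (TensorProduct.assoc k (Module.Dual k H) H M).toLinearMap ∘ₗ
    TensorProduct.mk k (Module.Dual k H ⊗[k] H) M
      ((TensorProduct.comm k H (Module.Dual k H)) (canel k H))

/-- The `H ⊗ H^*`-coaction `ρ(m) = ∑ m₍₋₁₎ ⊗ hⁱ ⊗ m₍₀₎ · hᵢ` (formula (2.2)). -/
def Fco (D : LRData k H M) : M →ₗ[k] X k H ⊗[k] M :=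
  (TensorProduct.assoc k H (Module.Dual k H) M).symm.toLinearMap ∘ₗ
    map LinearMap.id (insD D.aR) ∘ₗ D.cL

/-- The functor `F` on objects. -/
def Fdata (D : LRData k H M) : YDData k H M := ⟨Fact D, Fco D⟩

/-! ### The functor `G : ᴴ⊗ᴴ*YD → 𝓛𝓡(H)` -/

variable (k H)

/-- `h ↦ h ⊗ ε`. -/
def ιH : H →ₗ[k] X k H :=
  (TensorProduct.mk k H (Module.Dual k H)).flip (Coalgebra.counit : Module.Dual k H)

/-- `f ↦ 1 ⊗ f`. -/
def ιD : Module.Dual k H →ₗ[k] X k H := TensorProduct.mk k H (Module.Dual k H) 1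

/-- `h ⊗ f ↦ ε*(f) h`. -/
def πH : X k H →ₗ[k] H := (TensorProduct.rid k H).toLinearMap ∘ₗ map LinearMap.id (εD k H)

/-- `(h ⊗ f) ⊗ h' ↦ ε(h)⟨f, h'⟩`. -/
def ξX : X k H ⊗[k] H →ₗ[k] k :=
  LinearMap.mul' k k ∘ₗ map Coalgebra.counit (contractLeft k H) ∘ₗ
    (TensorProduct.assoc k H (Module.Dual k H) H).toLinearMap

variable {k H}

/-- The restricted left `H`-action `h · m = (h ⊗ ε) · m`. -/
def gL (A : X k H ⊗[k] M →ₗ[k] M) : H ⊗[k] M →ₗ[k] M := A ∘ₗ map (ιH k H) LinearMap.id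

/-- The right `H`-action `m · h = ⟨(ε ⊗ id) m₍₋₁₎, h⟩ m₍₀₎`. -/
def gR (C : M →ₗ[k] X k H ⊗[k] M) : M ⊗[k] H →ₗ[k] M :=
  (TensorProduct.lid k M).toLinearMap ∘ₗ map (ξX k H) LinearMap.id ∘ₗ
    (TensorProduct.assoc k (X k H) H M).symm.toLinearMap ∘ₗ
    map LinearMap.id (TensorProduct.comm k M H).toLinearMap ∘ₗ
    (TensorProduct.assoc k (X k H) M H).toLinearMap ∘ₗ map C LinearMap.id

/-- The left `H`-coaction `ρ_L(m) = (id ⊗ ε*)(m₍₋₁₎) ⊗ m₍₀₎`. -/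
def gcL (C : M →ₗ[k] X k H ⊗[k] M) : M →ₗ[k] H ⊗[k] M := map (πH k H) LinearMap.id ∘ₗ C

/-- The right `H`-coaction `ρ_R(m) = ∑ (1 ⊗ hⁱ) · m ⊗ hᵢ`. -/
def gcR (A : X k H ⊗[k] M →ₗ[k] M) : M →ₗ[k] M ⊗[k] H :=
  map (A ∘ₗ map (ιD k H) LinearMap.id) LinearMap.id ∘ₗ
    (TensorProduct.assoc k (Module.Dual k H) M H).symm.toLinearMap ∘ₗ
    map LinearMap.id (TensorProduct.comm k H M).toLinearMap ∘ₗ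
    (TensorProduct.assoc k (Module.Dual k H) H M).toLinearMap ∘ₗ
    map (TensorProduct.comm k H (Module.Dual k H)).toLinearMap LinearMap.id ∘ₗ
    TensorProduct.mk k (H ⊗[k] Module.Dual k H) M (canel k H)

/-- The functor `G` on objects. -/
def Gdata (E : YDData k H M) : LRData k H M :=
  ⟨gL E.act, gR E.coact, gcL E.coact, gcR E.act⟩

end

end YDL
namespace YDL

noncomputable section
open TensorProduct LinearMap Module

variable {k : Type} [Field k] {H : Type} [Ring H] [Bialgebra k H]
variable {M N P : Type} [AddCommGroup M] [Module k M] [AddCommGroup N] [Module k N]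
  [AddCommGroup P] [Module k P]

/-- The tensor product of two Yetter-Drinfeld-Long bimodule structures, with diagonal
actions and codiagonal coactions. -/
def tensorLR (D : LRData k H M) (D' : LRData k H N) : LRData k H (M ⊗[k] N) where
  aL := map D.aL D'.aL ∘ₗ (tensorTensorTensorComm k H H M N).toLinearMap ∘ₗ
    map Coalgebra.comul LinearMap.id
  aR := map D.aR D'.aR ∘ₗ (tensorTensorTensorComm k M N H H).toLinearMap ∘ₗ
    map LinearMap.id Coalgebra.comul
  cL := map (LinearMap.mul' k H) LinearMap.id ∘ₗ
    (tensorTensorTensorComm k H M H N).toLinearMap ∘ₗ map D.cL D'.cL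
  cR := map LinearMap.id (LinearMap.mul' k H) ∘ₗ
    (tensorTensorTensorComm k M H N H).toLinearMap ∘ₗ map D.cR D'.cR

variable [FiniteDimensional k H]

/-- The tensor product of two Yetter-Drinfeld module structures over `H ⊗ H^*`. -/
def tensorYD (E : YDData k H M) (E' : YDData k H N) : YDData k H (M ⊗[k] N) where
  act := map E.act E'.act ∘ₗ (tensorTensorTensorComm k (X k H) (X k H) M N).toLinearMap ∘ₗ
    map (ΔX k H) LinearMap.id
  coact := map (μX k H) LinearMap.id ∘ₗ
    (tensorTensorTensorComm k (X k H) M (X k H) N).toLinearMap ∘ₗ map E.coact E'.coact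

/-- A linear map `φ : M → N` is a morphism of Yetter-Drinfeld-Long bimodules
(`H`-bilinear and `H`-bicolinear). -/
def LRHom (D : LRData k H M) (D' : LRData k H N) (φ : M →ₗ[k] N) : Prop :=
  φ ∘ₗ D.aL = D'.aL ∘ₗ map LinearMap.id φ ∧
  φ ∘ₗ D.aR = D'.aR ∘ₗ map φ LinearMap.id ∧
  D'.cL ∘ₗ φ = map LinearMap.id φ ∘ₗ D.cL ∧
  D'.cR ∘ₗ φ = map φ LinearMap.id ∘ₗ D.cR

/-- A linear map `φ : M → N` is a morphism of Yetter-Drinfeld modules over `H ⊗ H^*`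
(`H ⊗ H^*`-linear and colinear). -/
def YDHom (E : YDData k H M) (E' : YDData k H N) (φ : M →ₗ[k] N) : Prop :=
  φ ∘ₗ E.act = E'.act ∘ₗ map LinearMap.id φ ∧
  E'.coact ∘ₗ φ = map LinearMap.id φ ∘ₗ E.coact

/-- The braiding of `𝓛𝓡(H)`: `m ⊗ n ↦ m₍₋₁₎·n₍₀₎ ⊗ m₍₀₎·n₍₁₎`. -/
def cLR (D : LRData k H M) (D' : LRData k H N) : M ⊗[k] N →ₗ[k] N ⊗[k] M :=
  map D'.aL D.aR ∘ₗ (tensorTensorTensorComm k H M N H).toLinearMap ∘ₗ map D.cL D'.cR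

/-- The inverse braiding of `𝓛𝓡(H)` (`T` is the inverse of the antipode):
`n ⊗ m ↦ m₍₀₎·S⁻¹(n₍₁₎) ⊗ S⁻¹(m₍₋₁₎)·n₍₀₎`. -/
def cLRinv (D : LRData k H M) (D' : LRData k H N) (T : H →ₗ[k] H) :
    N ⊗[k] M →ₗ[k] M ⊗[k] N :=
  map D.aR D'.aL ∘ₗ
    (TensorProduct.comm k (H ⊗[k] N) (M ⊗[k] H)).toLinearMap ∘ₗ
    (tensorTensorTensorComm k H M N H).toLinearMap ∘ₗ
    (TensorProduct.comm k (N ⊗[k] H) (H ⊗[k] M)).toLinearMap ∘ₗ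
    map (map LinearMap.id T) (map T LinearMap.id) ∘ₗ map D'.cR D.cL

/-- The braiding of the Yetter-Drinfeld category over `H ⊗ H^*`:
`m ⊗ n ↦ m₍₋₁₎·n ⊗ m₍₀₎`, built from the coaction on `M` and the action on `N`. -/
def cYD (C : M →ₗ[k] X k H ⊗[k] M) (A' : X k H ⊗[k] N →ₗ[k] N) : M ⊗[k] N →ₗ[k] N ⊗[k] M :=
  map A' LinearMap.id ∘ₗ (TensorProduct.assoc k (X k H) N M).symm.toLinearMap ∘ₗ
    map LinearMap.id (TensorProduct.comm k M N).toLinearMap ∘ₗ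
    (TensorProduct.assoc k (X k H) M N).toLinearMap ∘ₗ map C LinearMap.id

end

end YDL
namespace YDL
open TensorProduct LinearMap Module

/-! The elements `h ⊗ ε` and `1 ⊗ f` of `H ⊗ H^*` commute. The left `H`-action is the action of
the former, while `ρ_R(m) = ∑ (1 ⊗ hⁱ)·m ⊗ hᵢ` is assembled from actions of the latter, so the
left action commutes with `ρ_R`. -/

theorem map_assoc_symm_tmul {R A B C D : Type*} [CommSemiring R] [AddCommMonoid A] [Module R A]
    [AddCommMonoid B] [Module R B] [AddCommMonoid C] [Module R C] [AddCommMonoid D] [Module R D]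
    (f : A ⊗[R] B →ₗ[R] D) (a : A) (x : B ⊗[R] C) :
    map f LinearMap.id ((TensorProduct.assoc R A B C).symm (a ⊗ₜ x))
      = map (f ∘ₗ TensorProduct.mk R A B a) LinearMap.id x := by
  induction x using TensorProduct.induction_on with
  | zero => simp
  | tmul b c => simp
  | add x y hx hy => simp only [tmul_add, map_add, hx, hy]

theorem dualDistrib_tmul {R A B : Type*} [CommRing R] [AddCommGroup A] [Module R A]
    [AddCommGroup B] [Module R B] (f : Module.Dual R A) (g : Module.Dual R B) :
    dualDistrib R A B (f ⊗ₜ g) = LinearMap.mul' R R ∘ₗ map f g :=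
  TensorProduct.ext' fun a b => by simp [dualDistrib_apply]

section
variable {k : Type} [Field k] {H : Type} [Ring H] [Bialgebra k H]
  {M : Type} [AddCommGroup M] [Module k M]

theorem convL_tmul_counit (f : Module.Dual k H) :
    convL k H (f ⊗ₜ (Coalgebra.counit : Module.Dual k H)) = f := by
  ext h
  rw [convL, comp_apply, dualMap_apply, dualDistrib_tmul, ← rTensor_comp_lTensor, comp_apply,
    comp_apply, Coalgebra.lTensor_counit_comul]
  simp

theorem convL_counit_tmul (f : Module.Dual k H) :
    convL k H ((Coalgebra.counit : Module.Dual k H) ⊗ₜ f) = f := by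
  ext h
  rw [convL, comp_apply, dualMap_apply, dualDistrib_tmul, ← lTensor_comp_rTensor, comp_apply,
    comp_apply, Coalgebra.rTensor_counit_comul]
  simp

theorem IsXMod.act_ιD_act_ιH {E : YDData k H M} (hE : IsXMod E) (f : Module.Dual k H) (h : H)
    (m : M) :
    E.act (ιD k H f ⊗ₜ E.act (ιH k H h ⊗ₜ m)) = E.act (ιH k H h ⊗ₜ E.act (ιD k H f ⊗ₜ m)) := by
  simp only [ιD, ιH, mk_apply, flip_apply]
  rw [← hE.mul_act, ← hE.mul_act, one_mul, mul_one, convL_tmul_counit, convL_counit_tmul]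

theorem gcR_comp_of_commute [FiniteDimensional k H] (A : X k H ⊗[k] M →ₗ[k] M)
    (φ : M →ₗ[k] M) (hφ : ∀ f m, A (ιD k H f ⊗ₜ φ m) = φ (A (ιD k H f ⊗ₜ m))) :
    gcR A ∘ₗ φ = map φ LinearMap.id ∘ₗ gcR A := by
  ext m
  simp only [gcR, comp_apply, mk_apply]
  induction canel k H using TensorProduct.induction_on with
  | zero => simp
  | tmul h f => simp [hφ]
  | add c c' hc hc' => simp only [add_tmul, map_add, hc, hc']

end

/-- the induced structures on a Yetter-Drinfeld module over `H ⊗ H^*`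
satisfy the left-right Long compatibility. -/
theorem statement6 {k : Type} [Field k] {H : Type} [Ring H] [Bialgebra k H]
    [FiniteDimensional k H] {M : Type} [AddCommGroup M] [Module k M]
    (E : YDData k H M) (hE : IsYD E) :
    Cond2 (Gdata E) := by
  refine TensorProduct.ext' fun h m => ?_
  have hcomm := congr($(gcR_comp_of_commute E.act (gL E.act ∘ₗ TensorProduct.mk k H M h)
    fun f m => hE.xmod.act_ιD_act_ιH f h m) m)
  simpa [Cond2, Gdata, map_assoc_symm_tmul] using hcomm

end YDL
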